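/- An isotropic state ρ^{(F,d)} has positive partial transpose if and only if F ≤ 1/d. Equivalently, (id ⊗ T)(ρ^{(F,d)}) ≥ 0 iff F ≤ 1/d. -/

import Mathlib

open Matrix ComplexOrder

/-- The maximally entangled state `Φ = (1/d) Σ_{i,j} |i⟩⟨j| ⊗ |i⟩⟨j|`. -/
noncomputable def maxEnt (d : ℕ) : Matrix (Fin d × Fin d) (Fin d × Fin d) ℂ :=
  Matrix.of fun p q => if p.1 = p.2 ∧ q.1 = q.2 then (d : ℂ)⁻¹ else 0

/-- The isotropic state `ρ^{(F,d)} = F·Φ + (1−F)·(I−Φ)/(d²−1)`. -/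
noncomputable def isotropicState (d : ℕ) (F : ℝ) :
    Matrix (Fin d × Fin d) (Fin d × Fin d) ℂ :=
  (F : ℂ) • maxEnt d + (((1 - F) / ((d : ℝ) ^ 2 - 1) : ℝ) : ℂ) • (1 - maxEnt d)

/-- The partial transpose `(id ⊗ T)` on the second tensor factor. -/
def partialTranspose (d : ℕ) (X : Matrix (Fin d × Fin d) (Fin d × Fin d) ℂ) :
    Matrix (Fin d × Fin d) (Fin d × Fin d) ℂ :=
  Matrix.of fun p q => X (p.1, q.2) (q.1, p.2)

/-- The swap matrix. -/
def swapM (d : ℕ) : Matrix (Fin d × Fin d) (Fin d × Fin d) ℂ :=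
  Matrix.of fun p q => if p.1 = q.2 ∧ q.1 = p.2 then 1 else 0

lemma swapM_apply' (d : ℕ) (p q : Fin d × Fin d) :
    swapM d p q = if q = (p.2, p.1) then 1 else 0 := by
  simp only [swapM, Matrix.of_apply, Prod.ext_iff]
  congr 1
  simp [and_comm, eq_comm]

lemma swapM_mul_self (d : ℕ) : swapM d * swapM d = 1 := by
  ext p q
  rw [Matrix.mul_apply]
  simp only [swapM_apply', ite_mul, one_mul, zero_mul]
  rw [Finset.sum_ite_eq' Finset.univ (p.2, p.1)]
  simp [swapM, Matrix.one_apply, Prod.ext_iff, and_comm, eq_comm]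

lemma swapM_isHermitian (d : ℕ) : (swapM d).IsHermitian := by
  ext p q
  simp only [Matrix.conjTranspose_apply, swapM, Matrix.of_apply, and_comm]
  split <;> simp

/-- decomposition of the partial transpose of the isotropic state -/
lemma pt_iso (d : ℕ) (hd : 2 ≤ d) (F : ℝ) :
    partialTranspose d (isotropicState d F) =
      (((1 - F) / ((d : ℝ) ^ 2 - 1) : ℝ) : ℂ) • (1 : Matrix (Fin d × Fin d) (Fin d × Fin d) ℂ) +
      (((F - (1 - F) / ((d : ℝ) ^ 2 - 1)) / d : ℝ) : ℂ) • swapM d := by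
  have hd0 : ((d : ℝ)) ≠ 0 := by positivity
  have hd1 : ((d : ℝ) ^ 2 - 1) ≠ 0 := by
    have : (2 : ℝ) ≤ d := by exact_mod_cast hd
    nlinarith
  ext p q
  obtain ⟨i, j⟩ := p
  obtain ⟨k, l⟩ := q
  simp only [partialTranspose, isotropicState, maxEnt, swapM, Matrix.of_apply,
    Matrix.add_apply, Matrix.smul_apply, Matrix.sub_apply, Matrix.one_apply, Prod.ext_iff,
    smul_eq_mul]
  have hc0 : ((d : ℂ)) ≠ 0 := by exact_mod_cast Nat.cast_ne_zero.mpr (by omega)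
  have hc1 : ((d : ℂ) ^ 2 - 1) ≠ 0 := by exact_mod_cast Complex.ofReal_ne_zero.mpr hd1
  push_cast
  split_ifs <;> first
    | (exfalso; grind)
    | (field_simp; ring)
    | field_simp

lemma smul_posSemidef {n : Type*} [Fintype n] (r : ℝ) (hr : 0 ≤ r)
    {A : Matrix n n ℂ} (hA : A.PosSemidef) : ((r : ℂ) • A).PosSemidef := by
  refine Matrix.PosSemidef.of_dotProduct_mulVec_nonneg ?_ fun x => ?_
  · unfold Matrix.IsHermitian
    rw [Matrix.conjTranspose_smul, hA.1.eq]
    simp [Complex.star_def, Complex.conj_ofReal]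
  · rw [Matrix.smul_mulVec, dotProduct_smul, smul_eq_mul]
    exact mul_nonneg (by exact_mod_cast Complex.zero_le_real.mpr hr) (hA.dotProduct_mulVec_nonneg x)

lemma posSemidef_one_add_invol {n : Type*} [Fintype n] [DecidableEq n]
    (A : Matrix n n ℂ) (hA : A.IsHermitian) (h2 : A * A = 1) :
    ((1 : Matrix n n ℂ) + A).PosSemidef := by
  have key : (1 + A) = (((2:ℝ)⁻¹ : ℝ) : ℂ) • ((1 + A)ᴴ * (1 + A)) := by
    rw [Matrix.conjTranspose_add, Matrix.conjTranspose_one, hA.eq, add_mul, mul_add, mul_add,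
      one_mul, mul_one, h2]
    simp only [one_mul, mul_one]
    have h3 : (1 : Matrix n n ℂ) + A + (A + 1) = (2 : ℂ) • (1 + A) := by
      rw [two_smul]; abel
    rw [h3, smul_smul]
    norm_num
  rw [key]
  exact smul_posSemidef _ (by norm_num) (Matrix.posSemidef_conjTranspose_mul_self _)

lemma psd_entry_ineq {n : Type*} [Fintype n] [DecidableEq n] {M : Matrix n n ℂ}
    (h : M.PosSemidef) (a b : n) :
    0 ≤ M a a - M a b - M b a + M b b := by
  set x : n → ℂ := Pi.single a 1 - Pi.single b 1 with hx
  have key := h.dotProduct_mulVec_nonneg x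
  have hs : star x = x := by
    rw [hx]
    funext i
    simp only [Pi.star_apply, Pi.sub_apply, Pi.single_apply, star_sub,
      apply_ite (star : ℂ → ℂ), star_one, star_zero]
  rw [hs, hx, Matrix.mulVec_sub, dotProduct_sub, sub_dotProduct,
    sub_dotProduct] at key
  simp only [Matrix.mulVec_single, mul_one, single_dotProduct, one_mul,
    MulOpposite.op_one, one_smul, Matrix.col_apply] at key
  convert key using 1
  ring

example : True := trivial

/-- An isotropic state has positive partial transpose if and only if `F ≤ 1/d`. -/
theorem isotropicState_ppt_iff (d : ℕ) (hd : 2 ≤ d) (F : ℝ) (hF0 : 0 ≤ F) (hF1 : F ≤ 1) :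
    (partialTranspose d (isotropicState d F)).PosSemidef ↔ F ≤ 1 / d := by
  have hdR : (2 : ℝ) ≤ d := by exact_mod_cast hd
  have hdpos : (0 : ℝ) < d := by linarith
  have hd1 : (0 : ℝ) < (d : ℝ) ^ 2 - 1 := by nlinarith
  set c : ℝ := (1 - F) / ((d : ℝ) ^ 2 - 1) with hc
  set b : ℝ := (F - c) / d with hb
  have e1 : c * ((d : ℝ) ^ 2 - 1) = 1 - F := div_mul_cancel₀ _ (ne_of_gt hd1)
  have e2 : b * d = F - c := div_mul_cancel₀ _ (ne_of_gt hdpos)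
  rw [pt_iso d hd F, ← hc, ← hb]
  constructor
  · intro h
    set i0 : Fin d := ⟨0, by omega⟩
    set i1 : Fin d := ⟨1, by omega⟩
    have hne : i0 ≠ i1 := by simp [i0, i1, Fin.ext_iff]
    have key := psd_entry_ineq h (i0, i1) (i1, i0)
    simp only [Matrix.add_apply, Matrix.smul_apply, Matrix.one_apply, swapM, Matrix.of_apply,
      Prod.mk.injEq, smul_eq_mul] at key
    simp only [hne, Ne.symm hne, if_true, and_self, true_and, and_true, false_and, and_false,
      if_false, mul_one, mul_zero, add_zero, zero_add] at key
    have key2 : (0 : ℝ) ≤ c - b - b + c := by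
      have hcast : ((c - b - b + c : ℝ) : ℂ) = (c : ℂ) - (b : ℂ) - (b : ℂ) + (c : ℂ) := by
        push_cast; ring
      exact Complex.zero_le_real.mp (by rw [hcast]; exact key)
    rw [le_div_iff₀ hdpos]
    nlinarith [mul_nonneg (mul_nonneg (by linarith : (0:ℝ) ≤ c - b) (le_of_lt hdpos))
      (by linarith : (0:ℝ) ≤ (d : ℝ) - 1)]

  · intro hF
    have hFd : F * d ≤ 1 := by rw [le_div_iff₀ hdpos] at hF; exact hF
    have hc0 : 0 ≤ c := div_nonneg (by linarith) (le_of_lt hd1)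
    have hcb : 0 ≤ c - b := by
      nlinarith [mul_pos hdpos (by linarith : (0:ℝ) < (d : ℝ) - 1)]
    have hcb2 : 0 ≤ c + b := by
      nlinarith [mul_pos hdpos (by linarith : (0:ℝ) < (d : ℝ) + 1)]
    have hdecomp : (c : ℂ) • (1 : Matrix (Fin d × Fin d) (Fin d × Fin d) ℂ) + (b : ℂ) • swapM d =
        (((c + b) / 2 : ℝ) : ℂ) • (1 + swapM d) +
        (((c - b) / 2 : ℝ) : ℂ) • (1 + -swapM d) := by
      push_cast
      module
    rw [hdecomp]
    have hplus : ((1 : Matrix (Fin d × Fin d) (Fin d × Fin d) ℂ) + swapM d).PosSemidef :=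
      posSemidef_one_add_invol _ (swapM_isHermitian d) (swapM_mul_self d)
    have hminus : ((1 : Matrix (Fin d × Fin d) (Fin d × Fin d) ℂ) + -swapM d).PosSemidef := by
      refine posSemidef_one_add_invol _ ?_ ?_
      · unfold Matrix.IsHermitian
        rw [Matrix.conjTranspose_neg, (swapM_isHermitian d).eq]
      · rw [neg_mul_neg, swapM_mul_self]
    exact (smul_posSemidef _ (by linarith) hplus).add (smul_posSemidef _ (by linarith) hminus)
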